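/- Let H be a complex Hilbert space, T a bounded operator on H, and C, c > 0 constants such that ‖T^n‖ ≤ C for all n ≥ 0. Let M and N be subspaces of H such that ‖T^n x‖ ≥ c‖x‖ for every x ∈ M and every n ≥ 0, and ‖T^n y‖ → 0 as n → ∞ for every y ∈ N. Then for every x ∈ M and y ∈ N one has c‖x‖ ≤ C‖x + y‖, and moreover ‖x‖² + ‖y‖² ≤ (1 + 2(C/c) + 2(C/c)²)·‖x + y‖². -/
import Mathlib


noncomputable section

open Filter

/-- The key estimates in the proof of Lemma 1.1: if `‖Tⁿ‖ ≤ C`, `‖Tⁿx‖ ≥ c‖x‖` for `x ∈ M`,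
and `‖Tⁿy‖ → 0` for `y ∈ N`, then `c‖x‖ ≤ C‖x + y‖` and
`‖x‖² + ‖y‖² ≤ (1 + 2(C/c) + 2(C/c)²)‖x + y‖²` for all `x ∈ M`, `y ∈ N`. -/
theorem norm_estimates_of_power_bounded
    {H : Type} [NormedAddCommGroup H] [InnerProductSpace ℂ H] [CompleteSpace H]
    (T : H →L[ℂ] H) (C c : ℝ) (hC : 0 < C) (hc : 0 < c)
    (hTn : ∀ n : ℕ, ‖T ^ n‖ ≤ C)
    (M N : Submodule ℂ H)
    (hM : ∀ x ∈ M, ∀ n : ℕ, c * ‖x‖ ≤ ‖(T ^ n) x‖)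
    (hN : ∀ y ∈ N, Tendsto (fun n : ℕ => ‖(T ^ n) y‖) atTop (nhds 0)) :
    ∀ x ∈ M, ∀ y ∈ N,
      c * ‖x‖ ≤ C * ‖x + y‖ ∧
      ‖x‖ ^ 2 + ‖y‖ ^ 2 ≤ (1 + 2 * (C / c) + 2 * (C / c) ^ 2) * ‖x + y‖ ^ 2 := by
  intro x hx y hy
  have key : c * ‖x‖ ≤ C * ‖x + y‖ := by
    have hterm : ∀ n : ℕ, c * ‖x‖ - ‖(T ^ n) y‖ ≤ C * ‖x + y‖ := by
      intro n
      have h1 : c * ‖x‖ ≤ ‖(T ^ n) x‖ := hM x hx n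
      have h2 : ‖(T ^ n) (x + y)‖ ≤ C * ‖x + y‖ :=
        le_trans ((T ^ n).le_opNorm _) (by
          exact mul_le_mul_of_nonneg_right (hTn n) (norm_nonneg _))
      have h3 : ‖(T ^ n) x‖ ≤ ‖(T ^ n) (x + y)‖ + ‖(T ^ n) y‖ := by
        have : (T ^ n) x = (T ^ n) (x + y) - (T ^ n) y := by
          rw [map_add]; abel
        rw [this]
        exact norm_sub_le _ _
      linarith
    have hlim : Tendsto (fun n : ℕ => c * ‖x‖ - ‖(T ^ n) y‖) atTop (nhds (c * ‖x‖)) := by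
      have := (hN y hy)
      have := Tendsto.sub (tendsto_const_nhds : Tendsto (fun _ : ℕ => c * ‖x‖) atTop (nhds (c * ‖x‖))) this
      simpa using this
    exact le_of_tendsto hlim (Eventually.of_forall hterm)
  refine ⟨key, ?_⟩
  have hxle : ‖x‖ ≤ (C / c) * ‖x + y‖ := by
    rw [div_mul_eq_mul_div, le_div_iff₀ hc]
    linarith [key]
  have hyle : ‖y‖ ≤ ‖x‖ + ‖x + y‖ := by
    have : y = (x + y) - x := by abel
    calc ‖y‖ = ‖(x + y) - x‖ := by rw [← this]
    _ ≤ ‖x + y‖ + ‖x‖ := norm_sub_le _ _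
    _ = ‖x‖ + ‖x + y‖ := by ring
  nlinarith [norm_nonneg x, norm_nonneg y, norm_nonneg (x + y), sq_nonneg (‖x‖ - (C/c) * ‖x+y‖), div_pos hC hc]
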